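/- Let d ≥ 1, P ≥ 1, m_1, …, m_P > 0 and ν_1, …, ν_P ∈ ℕ. Then the linear operator f ↦ ∏_{l=1}^{P} (−Δ + m_l²)^{ν_l} f, where Δ is the Laplacian, is a bijection of the Schwartz space 𝒮(ℝ^d; ℂ) onto itself. -/

import Mathlib

open scoped BigOperators

/-- The partial derivative `∂_i g` of a function on `ℝ^d`. -/
noncomputable def pderiv {d : ℕ} (i : Fin d) (g : EuclideanSpace ℝ (Fin d) → ℂ) :
    EuclideanSpace ℝ (Fin d) → ℂ :=
  fun x => fderiv ℝ g x (EuclideanSpace.single i (1 : ℝ))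

/-- The Laplacian `Δ g = ∑ i ∂_i² g` on `ℝ^d`. -/
noncomputable def laplacian {d : ℕ} (g : EuclideanSpace ℝ (Fin d) → ℂ) :
    EuclideanSpace ℝ (Fin d) → ℂ :=
  fun x => ∑ i, pderiv i (pderiv i g) x

/-- The Klein–Gordon type operator `−Δ + m²`. -/
noncomputable def kleinGordonOp {d : ℕ} (m : ℝ) (g : EuclideanSpace ℝ (Fin d) → ℂ) :
    EuclideanSpace ℝ (Fin d) → ℂ :=
  fun x => -laplacian g x + (m : ℂ) ^ 2 * g x

/-- The constant-coefficient operator `∏_l (−Δ + m_l²)^{ν_l}` (composition of the operators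
`−Δ + m_l²` with multiplicities `ν_l`). -/
noncomputable def prodKleinGordonOp {d : ℕ} (P : ℕ) (m : Fin P → ℝ) (ν : Fin P → ℕ) :
    (EuclideanSpace ℝ (Fin d) → ℂ) → (EuclideanSpace ℝ (Fin d) → ℂ) :=
  (List.ofFn fun l : Fin P => (kleinGordonOp (m l))^[ν l]).foldr (· ∘ ·) id

/-! Under the Fourier transform `−Δ + m²` becomes multiplication by the symbol
`(2π)²‖ξ‖² + m² = m² (1 + ‖2πξ/m‖²)`. For `m ≠ 0` both this symbol and its reciprocal (a rescaled
Bessel potential) have temperate growth, so the Fourier multiplier with the reciprocal symbol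
inverts `−Δ + m²` on Schwartz space, and a composition of such bijections is a bijection. -/

open SchwartzMap Real
open scoped Laplacian

namespace SchwartzMap

variable {𝕜 E F : Type*} [RCLike 𝕜] [NormedAddCommGroup E] [NormedAddCommGroup F]
  [InnerProductSpace ℝ E] [NormedSpace ℂ F] [NormedSpace 𝕜 F] [SMulCommClass ℂ 𝕜 F]
  [FiniteDimensional ℝ E] [MeasurableSpace E] [BorelSpace E]

theorem fourierMultiplierCLM_add {g₁ g₂ : E → 𝕜} (hg₁ : g₁.HasTemperateGrowth)
    (hg₂ : g₂.HasTemperateGrowth) :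
    fourierMultiplierCLM F (g₁ + g₂) = fourierMultiplierCLM F g₁ + fourierMultiplierCLM F g₂ := by
  ext1 f
  simp [fourierMultiplierCLM_apply, smulLeftCLM_add hg₁ hg₂]

theorem fourierMultiplierCLM_bijective [CompleteSpace F] {g h : E → 𝕜}
    (hg : g.HasTemperateGrowth) (hh : h.HasTemperateGrowth) (hgh : g * h = 1) :
    Function.Bijective (fourierMultiplierCLM F g) := by
  have hhg : h * g = 1 := mul_comm g h ▸ hgh
  refine Function.bijective_iff_has_inverse.mpr ⟨fourierMultiplierCLM F h, fun f => ?_, fun f => ?_⟩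
  · simp [fourierMultiplierCLM_fourierMultiplierCLM_apply hh hg, hhg, Pi.one_def]
  · simp [fourierMultiplierCLM_fourierMultiplierCLM_apply hg hh, hgh, Pi.one_def]

end SchwartzMap

section KleinGordonSymbol

variable {E : Type*} [NormedAddCommGroup E]

noncomputable def kleinGordonSymbol (m : ℝ) (ξ : E) : ℝ := (2 * π) ^ 2 * ‖ξ‖ ^ 2 + m ^ 2

theorem kleinGordonSymbol_pos {m : ℝ} (hm : m ≠ 0) (ξ : E) : 0 < kleinGordonSymbol m ξ := by
  unfold kleinGordonSymbol
  positivity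

theorem kleinGordonSymbol_eq_mul_one_add_norm_smul_sq [NormedSpace ℝ E] {m : ℝ} (hm : m ≠ 0)
    (ξ : E) : kleinGordonSymbol m ξ = m ^ 2 * (1 + ‖(2 * π / m) • ξ‖ ^ 2) := by
  rw [kleinGordonSymbol, norm_smul, Real.norm_eq_abs, mul_pow |2 * π / m|, sq_abs]
  field_simp
  ring

variable [InnerProductSpace ℝ E]

theorem hasTemperateGrowth_kleinGordonSymbol (m : ℝ) :
    (kleinGordonSymbol (E := E) m).HasTemperateGrowth := by
  unfold kleinGordonSymbol
  fun_prop

theorem hasTemperateGrowth_inv_kleinGordonSymbol {m : ℝ} (hm : m ≠ 0) :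
    (kleinGordonSymbol (E := E) m)⁻¹.HasTemperateGrowth := by
  have hbessel := (Function.hasTemperateGrowth_one_add_norm_sq_rpow E (-1)).comp
    ((2 * π / m) • ContinuousLinearMap.id ℝ E).hasTemperateGrowth
  have hinv : (kleinGordonSymbol (E := E) m)⁻¹ =
      fun ξ => (m ^ 2)⁻¹ * (1 + ‖(2 * π / m) • ξ‖ ^ 2) ^ (-1 : ℝ) := by
    ext ξ
    rw [Pi.inv_apply, kleinGordonSymbol_eq_mul_one_add_norm_smul_sq hm, Real.rpow_neg_one, mul_inv]
  rw [hinv]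
  exact (Function.HasTemperateGrowth.const _).mul hbessel

end KleinGordonSymbol

section KleinGordonCLM

variable {E F : Type*} [NormedAddCommGroup E] [InnerProductSpace ℝ E] [FiniteDimensional ℝ E]
  [MeasurableSpace E] [BorelSpace E] [NormedAddCommGroup F] [NormedSpace ℂ F] [CompleteSpace F]

variable (F) in
noncomputable def kleinGordonCLM (m : ℝ) : 𝓢(E, F) →L[ℝ] 𝓢(E, F) :=
  fourierMultiplierCLM F (kleinGordonSymbol m)

theorem kleinGordonCLM_apply (m : ℝ) (f : 𝓢(E, F)) :
    kleinGordonCLM F m f = -Δ f + (m ^ 2 : ℝ) • f := by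
  have hsymbol : kleinGordonSymbol (E := E) m = (2 * π) ^ 2 • (‖·‖ ^ 2) + fun _ => m ^ 2 := rfl
  rw [kleinGordonCLM, hsymbol, fourierMultiplierCLM_add (by fun_prop) (by fun_prop),
    fourierMultiplierCLM_smul (by fun_prop), fourierMultiplierCLM_const,
    laplacian_eq_fourierMultiplierCLM]
  simp

theorem kleinGordonCLM_bijective {m : ℝ} (hm : m ≠ 0) :
    Function.Bijective (kleinGordonCLM (E := E) F m) :=
  fourierMultiplierCLM_bijective (hasTemperateGrowth_kleinGordonSymbol m)
    (hasTemperateGrowth_inv_kleinGordonSymbol hm)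
    (funext fun ξ => mul_inv_cancel₀ (kleinGordonSymbol_pos hm ξ).ne')

end KleinGordonCLM

theorem SchwartzMap.coe_laplacian_eq_laplacian {d : ℕ} (f : 𝓢(EuclideanSpace ℝ (Fin d), ℂ)) :
    ⇑(Δ f : 𝓢(EuclideanSpace ℝ (Fin d), ℂ)) = laplacian ⇑f := by
  ext x
  rw [laplacian_eq_sum (EuclideanSpace.basisFun (Fin d) ℝ), sum_apply]
  simp only [EuclideanSpace.basisFun_apply]
  rfl

theorem coe_kleinGordonCLM {d : ℕ} (m : ℝ) (f : 𝓢(EuclideanSpace ℝ (Fin d), ℂ)) :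
    ⇑(kleinGordonCLM ℂ m f) = kleinGordonOp m ⇑f := by
  ext x
  rw [kleinGordonCLM_apply, add_apply, neg_apply, coe_laplacian_eq_laplacian, smul_apply,
    Complex.real_smul]
  simp [kleinGordonOp]

theorem Function.Bijective.foldr_comp {α : Type*} :
    ∀ {l : List (α → α)}, (∀ g ∈ l, Function.Bijective g) →
      Function.Bijective (l.foldr (· ∘ ·) id)
  | [], _ => Function.bijective_id
  | g :: _, h => (h g List.mem_cons_self).comp (foldr_comp fun g' hg' => h g' (.tail _ hg'))

theorem Function.Semiconj.foldr_comp_ofFn {α β : Type*} {φ : α → β} :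
    ∀ {n : ℕ} {f : Fin n → α → α} {g : Fin n → β → β}, (∀ i, Function.Semiconj φ (f i) (g i)) →
      Function.Semiconj φ ((List.ofFn f).foldr (· ∘ ·) id) ((List.ofFn g).foldr (· ∘ ·) id)
  | 0, _, _, _ => Function.Semiconj.id_right
  | _ + 1, _, _, h => by
    simpa only [List.ofFn_succ, List.foldr_cons] using (h 0).comp_right (foldr_comp_ofFn (h ·.succ))

theorem prodKleinGordon_bijective_on_schwartz
    (d : ℕ) (P : ℕ)
    (m : Fin P → ℝ) (hm : ∀ l, 0 < m l) (ν : Fin P → ℕ) :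
    ∃ T : SchwartzMap (EuclideanSpace ℝ (Fin d)) ℂ → SchwartzMap (EuclideanSpace ℝ (Fin d)) ℂ,
      (∀ f : SchwartzMap (EuclideanSpace ℝ (Fin d)) ℂ, ⇑(T f) = prodKleinGordonOp P m ν ⇑f) ∧
      Function.Bijective T := by
  have hconj (l : Fin P) : Function.Semiconj (⇑) (kleinGordonCLM ℂ (m l))
      (kleinGordonOp (d := d) (m l)) := coe_kleinGordonCLM (m l)
  refine ⟨(List.ofFn fun l => (kleinGordonCLM ℂ (m l))^[ν l]).foldr (· ∘ ·) id,
    Function.Semiconj.foldr_comp_ofFn fun l => (hconj l).iterate_right (ν l), ?_⟩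
  refine Function.Bijective.foldr_comp fun g hg => ?_
  obtain ⟨l, rfl⟩ := List.mem_ofFn.mp hg
  exact (kleinGordonCLM_bijective (hm l).ne').iterate (ν l)
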